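/- Let r > 0 and let (c_ω)_{ω∈ℤ²} be a square-summable family of complex numbers. For each ρ ∈ ℤ² define Γ_{ρ,r} := ∑_{ω∈ℤ², |ω| = r/(2π) = |ω−ρ|} c_ω · conj(c_{ω−ρ}) (a finite sum). Then ∑_{ρ∈ℤ²} |Γ_{ρ,r}|² ≤ 5 · (∑_{ω∈ℤ²} |c_ω|²)². -/
import Mathlib
open scoped Classical

lemma zyg_key_card (R : ℝ) (ρ : ℤ × ℤ) (hρ : ρ ≠ 0) (S : Finset (ℤ × ℤ))
    (hS : ∀ ω ∈ S, ((ω.1 : ℝ) ^ 2 + (ω.2 : ℝ) ^ 2 = R ^ 2) ∧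
      (((ω.1 : ℝ) - ρ.1) ^ 2 + ((ω.2 : ℝ) - ρ.2) ^ 2 = R ^ 2)) :
    S.card ≤ 2 := by
  rcases S.eq_empty_or_nonempty with h | ⟨ω₀, h₀⟩
  · simp [h]
  have hρne : ρ.1 ≠ 0 ∨ ρ.2 ≠ 0 := by
    by_contra h
    push_neg at h
    exact hρ (Prod.ext h.1 h.2)
  have hρpos : 0 < ρ.1 ^ 2 + ρ.2 ^ 2 := by
    rcases hρne with h | h <;> nlinarith [sq_nonneg ρ.1, sq_nonneg ρ.2, sq_pos_of_ne_zero h]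
  set f : ℤ × ℤ → ℤ := fun ω => ω.1 * ρ.2 - ω.2 * ρ.1 with hf
  -- for ω ∈ S : 2 (ω·ρ) = |ρ|²  (over ℤ)
  have hdot : ∀ ω ∈ S, 2 * (ω.1 * ρ.1 + ω.2 * ρ.2) = ρ.1 ^ 2 + ρ.2 ^ 2 := by
    intro ω hω
    obtain ⟨h1, h2⟩ := hS ω hω
    have : ((2 * (ω.1 * ρ.1 + ω.2 * ρ.2) : ℤ) : ℝ) = ((ρ.1 ^ 2 + ρ.2 ^ 2 : ℤ) : ℝ) := by
      push_cast
      nlinarith [h1, h2]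
    exact_mod_cast this
  have hnorm : ∀ ω ∈ S, ∀ ν ∈ S, ω.1 ^ 2 + ω.2 ^ 2 = ν.1 ^ 2 + ν.2 ^ 2 := by
    intro ω hω ν hν
    have : ((ω.1 ^ 2 + ω.2 ^ 2 : ℤ) : ℝ) = ((ν.1 ^ 2 + ν.2 ^ 2 : ℤ) : ℝ) := by
      push_cast
      rw [(hS ω hω).1, (hS ν hν).1]
    exact_mod_cast this
  have hsq : ∀ ω ∈ S, ∀ ν ∈ S, f ω ^ 2 = f ν ^ 2 := by
    intro ω hω ν hν
    have h1 := hdot ω hω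
    have h2 := hdot ν hν
    have h3 := hnorm ω hω ν hν
    simp only [hf]
    nlinarith [h1, h2, h3]
  have hinj : ∀ ω ∈ S, ∀ ν ∈ S, f ω = f ν → ω = ν := by
    intro ω hω ν hν hfe
    have h1 := hdot ω hω
    have h2 := hdot ν hν
    simp only [hf] at hfe
    have e1two : 2 * ((ω.1 - ν.1) * (ρ.1 ^ 2 + ρ.2 ^ 2)) = 0 := by
      linear_combination ρ.1 * h1 - ρ.1 * h2 + (2 * ρ.2) * hfe
    have e2two : 2 * ((ω.2 - ν.2) * (ρ.1 ^ 2 + ρ.2 ^ 2)) = 0 := by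
      linear_combination ρ.2 * h1 - ρ.2 * h2 - (2 * ρ.1) * hfe
    have e1 : (ω.1 - ν.1) * (ρ.1 ^ 2 + ρ.2 ^ 2) = 0 := by linarith
    have e2 : (ω.2 - ν.2) * (ρ.1 ^ 2 + ρ.2 ^ 2) = 0 := by linarith
    have hne : ρ.1 ^ 2 + ρ.2 ^ 2 ≠ 0 := ne_of_gt hρpos
    have := mul_eq_zero.1 e1
    have := mul_eq_zero.1 e2
    apply Prod.ext <;> omega
  have hmaps : ∀ ω ∈ S, f ω ∈ ({f ω₀, -f ω₀} : Finset ℤ) := by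
    intro ω hω
    have := hsq ω hω ω₀ h₀
    have : f ω * f ω = f ω₀ * f ω₀ := by nlinarith [this]
    rcases mul_self_eq_mul_self_iff.1 this with h | h <;> simp [h]
  calc S.card ≤ ({f ω₀, -f ω₀} : Finset ℤ).card :=
        Finset.card_le_card_of_injOn f hmaps (fun a ha b hb h => hinj a ha b hb h)
    _ ≤ 2 := by
        apply le_trans (Finset.card_insert_le _ _)
        simp

open Real Complex
open scoped ComplexConjugate Classical

lemma zyg_sqrt_iff (R x : ℝ) (hR : 0 < R) (hx : 0 ≤ x) : Real.sqrt x = R ↔ x = R ^ 2 :=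
  ⟨fun h => by rw [← Real.sq_sqrt hx, h], fun h => by rw [h, Real.sqrt_sq hR.le]⟩

theorem zyg_main (r : ℝ) (hr : 0 < r) (c : ℤ × ℤ → ℂ)
    (hc : Summable fun ω : ℤ × ℤ => ‖c ω‖ ^ 2) :
    (∑' ρ : ℤ × ℤ,
        ‖∑' ω : ℤ × ℤ,
            if (Real.sqrt ((ω.1 : ℝ) ^ 2 + (ω.2 : ℝ) ^ 2) = r / (2 * π) ∧
                Real.sqrt (((ω.1 - ρ.1 : ℤ) : ℝ) ^ 2 + ((ω.2 - ρ.2 : ℤ) : ℝ) ^ 2) = r / (2 * π))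
            then c ω * conj (c (ω - ρ)) else 0‖ ^ 2)
      ≤ 5 * (∑' ω : ℤ × ℤ, ‖c ω‖ ^ 2) ^ 2 := by
  set R := r / (2 * π) with hRdef
  have hR : 0 < R := div_pos hr (by positivity)
  set B := ⌈R⌉ with hB
  set T : Finset (ℤ × ℤ) :=
    (Finset.Icc ((-B, -B) : ℤ × ℤ) (B, B)).filter
      (fun ω => (ω.1 : ℝ) ^ 2 + (ω.2 : ℝ) ^ 2 = R ^ 2) with hTdef
  have hT : ∀ ω : ℤ × ℤ, ω ∈ T ↔ (ω.1 : ℝ) ^ 2 + (ω.2 : ℝ) ^ 2 = R ^ 2 := by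
    intro ω
    constructor
    · intro h
      exact (Finset.mem_filter.1 h).2
    · intro h
      refine Finset.mem_filter.2 ⟨?_, h⟩
      rw [Finset.mem_Icc]
      have hBR : R ≤ (B : ℝ) := Int.le_ceil R
      have h1 : (ω.1 : ℝ) ≤ (B : ℝ) := by nlinarith [sq_nonneg ((ω.2 : ℝ))]
      have h2 : (-B : ℝ) ≤ (ω.1 : ℝ) := by nlinarith [sq_nonneg ((ω.2 : ℝ))]
      have h3 : (ω.2 : ℝ) ≤ (B : ℝ) := by nlinarith [sq_nonneg ((ω.1 : ℝ))]
      have h4 : (-B : ℝ) ≤ (ω.2 : ℝ) := by nlinarith [sq_nonneg ((ω.1 : ℝ))]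
      constructor
      · exact ⟨by exact_mod_cast h2, by exact_mod_cast h4⟩
      · exact ⟨by exact_mod_cast h1, by exact_mod_cast h3⟩
  have hsqrt : ∀ x : ℤ × ℤ, (Real.sqrt ((x.1 : ℝ) ^ 2 + (x.2 : ℝ) ^ 2) = R) ↔ x ∈ T :=
    fun x => (zyg_sqrt_iff R _ hR (by positivity)).trans (hT x).symm
  -- rewrite the if-condition
  have hcond : ∀ ρ ω : ℤ × ℤ,
      (if (Real.sqrt ((ω.1 : ℝ) ^ 2 + (ω.2 : ℝ) ^ 2) = R ∧
          Real.sqrt (((ω.1 - ρ.1 : ℤ) : ℝ) ^ 2 + ((ω.2 - ρ.2 : ℤ) : ℝ) ^ 2) = R)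
        then c ω * conj (c (ω - ρ)) else 0)
      = (if (ω ∈ T ∧ ω - ρ ∈ T) then c ω * conj (c (ω - ρ)) else 0) := by
    intro ρ ω
    apply if_congr _ rfl rfl
    rw [hsqrt ω]
    have : (((ω.1 - ρ.1 : ℤ) : ℝ) ^ 2 + ((ω.2 - ρ.2 : ℤ) : ℝ) ^ 2)
        = (((ω - ρ).1 : ℝ) ^ 2 + ((ω - ρ).2 : ℝ) ^ 2) := by
      simp [Prod.fst_sub, Prod.snd_sub]
    rw [this, hsqrt (ω - ρ)]
  set Γ : ℤ × ℤ → ℂ := fun ρ => ∑ ω ∈ T, if ω - ρ ∈ T then c ω * conj (c (ω - ρ)) else 0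
    with hΓdef
  have hinner : ∀ ρ : ℤ × ℤ,
      (∑' ω : ℤ × ℤ,
        if (Real.sqrt ((ω.1 : ℝ) ^ 2 + (ω.2 : ℝ) ^ 2) = R ∧
            Real.sqrt (((ω.1 - ρ.1 : ℤ) : ℝ) ^ 2 + ((ω.2 - ρ.2 : ℤ) : ℝ) ^ 2) = R)
        then c ω * conj (c (ω - ρ)) else 0) = Γ ρ := by
    intro ρ
    have hvan : ∀ ω ∉ T,
        (if (Real.sqrt ((ω.1 : ℝ) ^ 2 + (ω.2 : ℝ) ^ 2) = R ∧
            Real.sqrt (((ω.1 - ρ.1 : ℤ) : ℝ) ^ 2 + ((ω.2 - ρ.2 : ℤ) : ℝ) ^ 2) = R)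
          then c ω * conj (c (ω - ρ)) else 0) = 0 :=
      fun ω hω => by rw [hcond ρ ω, if_neg (fun h => hω h.1)]
    rw [tsum_eq_sum (s := T) hvan]
    exact Finset.sum_congr rfl fun ω hω => by rw [hcond ρ ω]; simp [hω]
  set D : Finset (ℤ × ℤ) :=
    Finset.image (fun p : (ℤ × ℤ) × (ℤ × ℤ) => p.1 - p.2) (T ×ˢ T) with hDdef
  have hΓsupp : ∀ ρ ∉ D, Γ ρ = 0 := by
    intro ρ hρ
    apply Finset.sum_eq_zero
    intro ω hω
    rw [if_neg]
    intro hcontra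
    exact hρ (Finset.mem_image.2 ⟨(ω, ω - ρ), Finset.mem_product.2 ⟨hω, hcontra⟩,
      sub_sub_cancel ω ρ⟩)
  set S : ℝ := ∑ ω ∈ T, ‖c ω‖ ^ 2 with hSdef
  set Stot : ℝ := ∑' ω : ℤ × ℤ, ‖c ω‖ ^ 2 with hStot
  have hS0 : 0 ≤ S := Finset.sum_nonneg fun ω _ => by positivity
  have hSle : S ≤ Stot := Summable.sum_le_tsum T (fun ω _ => by positivity) hc
  have hStot0 : 0 ≤ Stot := hS0.trans hSle
  -- Γ 0
  have hΓ0 : ‖Γ 0‖ ^ 2 = S ^ 2 := by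
    have : Γ 0 = (S : ℂ) := by
      rw [hΓdef, hSdef]
      push_cast
      apply Finset.sum_congr rfl
      intro ω hω
      rw [sub_zero, if_pos hω, Complex.mul_conj]
      norm_cast
      rw [Complex.normSq_eq_norm_sq]
    rw [this]
    simp [_root_.abs_of_nonneg hS0]
  -- bound for ρ ≠ 0
  have hΓρ : ∀ ρ ∈ D.erase 0,
      ‖Γ ρ‖ ^ 2 ≤ 2 * ∑ ω ∈ T.filter (fun ω => ω - ρ ∈ T), ‖c ω‖ ^ 2 * ‖c (ω - ρ)‖ ^ 2 := by
    intro ρ hρ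
    have hρ0 : ρ ≠ 0 := (Finset.mem_erase.1 hρ).1
    set Sρ := T.filter (fun ω => ω - ρ ∈ T) with hSρ
    have hcard : (Sρ.card : ℝ) ≤ 2 := by
      have : Sρ.card ≤ 2 := by
        apply zyg_key_card R ρ hρ0
        intro ω hω
        obtain ⟨h1, h2⟩ := Finset.mem_filter.1 hω
        refine ⟨(hT ω).1 h1, ?_⟩
        have := (hT (ω - ρ)).1 h2
        push_cast [Prod.fst_sub, Prod.snd_sub] at this ⊢
        convert this using 2 <;> ring
      exact_mod_cast this
    have hΓeq : Γ ρ = ∑ ω ∈ Sρ, c ω * conj (c (ω - ρ)) := by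
      rw [hΓdef, hSρ, Finset.sum_filter]
    have hn1 : ‖Γ ρ‖ ≤ ∑ ω ∈ Sρ, ‖c ω‖ * ‖c (ω - ρ)‖ := by
      rw [hΓeq]
      refine (norm_sum_le _ _).trans ?_
      apply Finset.sum_le_sum
      intro ω _
      rw [norm_mul, RCLike.norm_conj]
    have hn2 : ‖Γ ρ‖ ^ 2 ≤ (∑ ω ∈ Sρ, ‖c ω‖ * ‖c (ω - ρ)‖) ^ 2 :=
      pow_le_pow_left₀ (norm_nonneg _) hn1 2
    have hn3 : (∑ ω ∈ Sρ, ‖c ω‖ * ‖c (ω - ρ)‖) ^ 2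
        ≤ (Sρ.card : ℝ) * ∑ ω ∈ Sρ, (‖c ω‖ * ‖c (ω - ρ)‖) ^ 2 := by
      exact sq_sum_le_card_mul_sum_sq
    have hn4 : (Sρ.card : ℝ) * ∑ ω ∈ Sρ, (‖c ω‖ * ‖c (ω - ρ)‖) ^ 2
        ≤ 2 * ∑ ω ∈ Sρ, ‖c ω‖ ^ 2 * ‖c (ω - ρ)‖ ^ 2 := by
      have : ∑ ω ∈ Sρ, (‖c ω‖ * ‖c (ω - ρ)‖) ^ 2 = ∑ ω ∈ Sρ, ‖c ω‖ ^ 2 * ‖c (ω - ρ)‖ ^ 2 :=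
        Finset.sum_congr rfl fun ω _ => by ring
      rw [this]
      apply mul_le_mul_of_nonneg_right hcard
      exact Finset.sum_nonneg fun ω _ => by positivity
    linarith
  -- double sum bound
  have hdouble : ∑ ρ ∈ D.erase 0, ∑ ω ∈ T.filter (fun ω => ω - ρ ∈ T),
      ‖c ω‖ ^ 2 * ‖c (ω - ρ)‖ ^ 2 ≤ S * S := by
    have hswap : ∑ ρ ∈ D.erase 0, ∑ ω ∈ T.filter (fun ω => ω - ρ ∈ T),
        ‖c ω‖ ^ 2 * ‖c (ω - ρ)‖ ^ 2
        = ∑ ω ∈ T, ∑ ρ ∈ D.erase 0,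
            (if ω - ρ ∈ T then ‖c ω‖ ^ 2 * ‖c (ω - ρ)‖ ^ 2 else 0) := by
      rw [Finset.sum_comm]
      exact Finset.sum_congr rfl fun ρ _ => (Finset.sum_filter _ _)
    rw [hswap]
    have : ∀ ω ∈ T, ∑ ρ ∈ D.erase 0,
        (if ω - ρ ∈ T then ‖c ω‖ ^ 2 * ‖c (ω - ρ)‖ ^ 2 else 0) ≤ ‖c ω‖ ^ 2 * S := by
      intro ω _
      rw [← Finset.sum_filter]
      set F := (D.erase 0).filter (fun ρ => ω - ρ ∈ T) with hF
      have himg : ∑ ρ ∈ F, ‖c ω‖ ^ 2 * ‖c (ω - ρ)‖ ^ 2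
          = ∑ ν ∈ F.image (fun ρ => ω - ρ), ‖c ω‖ ^ 2 * ‖c ν‖ ^ 2 := by
        rw [Finset.sum_image]
        intro a _ b _ h
        exact sub_right_injective h
      rw [himg]
      have hsub : F.image (fun ρ => ω - ρ) ⊆ T := by
        intro ν hν
        obtain ⟨ρ, hρ, rfl⟩ := Finset.mem_image.1 hν
        exact (Finset.mem_filter.1 hρ).2
      calc ∑ ν ∈ F.image (fun ρ => ω - ρ), ‖c ω‖ ^ 2 * ‖c ν‖ ^ 2
          ≤ ∑ ν ∈ T, ‖c ω‖ ^ 2 * ‖c ν‖ ^ 2 :=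
            Finset.sum_le_sum_of_subset_of_nonneg hsub (fun ν _ _ => by positivity)
        _ = ‖c ω‖ ^ 2 * S := by rw [hSdef, Finset.mul_sum]
    calc ∑ ω ∈ T, ∑ ρ ∈ D.erase 0, (if ω - ρ ∈ T then ‖c ω‖ ^ 2 * ‖c (ω - ρ)‖ ^ 2 else 0)
        ≤ ∑ ω ∈ T, ‖c ω‖ ^ 2 * S := Finset.sum_le_sum this
      _ = S * S := by rw [hSdef, ← Finset.sum_mul, mul_comm]
  -- put it together
  calc _ = ∑' ρ : ℤ × ℤ, ‖Γ ρ‖ ^ 2 := tsum_congr fun ρ => by rw [hinner ρ]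
    _ = ∑ ρ ∈ D, ‖Γ ρ‖ ^ 2 := tsum_eq_sum (fun ρ hρ => by rw [hΓsupp ρ hρ]; simp)
    _ ≤ ‖Γ 0‖ ^ 2 + ∑ ρ ∈ D.erase 0, ‖Γ ρ‖ ^ 2 := by
        by_cases h0 : (0 : ℤ × ℤ) ∈ D
        · rw [← Finset.add_sum_erase D _ h0]
        · rw [Finset.erase_eq_of_notMem h0]
          nlinarith [norm_nonneg (Γ 0)]
    _ ≤ S ^ 2 + 2 * (S * S) := by
        rw [hΓ0]
        have h1 : ∑ ρ ∈ D.erase 0, ‖Γ ρ‖ ^ 2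
            ≤ ∑ ρ ∈ D.erase 0, 2 * ∑ ω ∈ T.filter (fun ω => ω - ρ ∈ T),
                ‖c ω‖ ^ 2 * ‖c (ω - ρ)‖ ^ 2 := Finset.sum_le_sum hΓρ
        have h2 : ∑ ρ ∈ D.erase 0, 2 * ∑ ω ∈ T.filter (fun ω => ω - ρ ∈ T),
            ‖c ω‖ ^ 2 * ‖c (ω - ρ)‖ ^ 2 ≤ 2 * (S * S) := by
          rw [← Finset.mul_sum]
          linarith [hdouble]
        linarith
    _ ≤ 5 * Stot ^ 2 := by nlinarith [pow_le_pow_left₀ hS0 hSle 2]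

/-- For `r > 0` and square-summable `(c ω)_{ω ∈ ℤ²}`, with
`Γ_{ρ,r} = ∑_{ω : |ω| = r/(2π) = |ω-ρ|} c ω conj (c (ω-ρ))`, one has
`∑_ρ |Γ_{ρ,r}|² ≤ 5 (∑_ω |c ω|²)²`. -/
theorem zygmund_correlation_bound (r : ℝ) (hr : 0 < r) (c : ℤ × ℤ → ℂ)
    (hc : Summable fun ω : ℤ × ℤ => ‖c ω‖ ^ 2) :
    (∑' ρ : ℤ × ℤ,
        ‖∑' ω : ℤ × ℤ,
            if (Real.sqrt ((ω.1 : ℝ) ^ 2 + (ω.2 : ℝ) ^ 2) = r / (2 * π) ∧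
                Real.sqrt (((ω.1 - ρ.1 : ℤ) : ℝ) ^ 2 + ((ω.2 - ρ.2 : ℤ) : ℝ) ^ 2) = r / (2 * π))
            then c ω * conj (c (ω - ρ)) else 0‖ ^ 2)
      ≤ 5 * (∑' ω : ℤ × ℤ, ‖c ω‖ ^ 2) ^ 2 := by
  exact zyg_main r hr c hc
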